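/- arXiv:2108.08133 — 7 statements merged into one kernel-verified Lean document; each statement's English description precedes it below -/
import Mathlib

section
/- If H is an n×n matrix with entries in {-1, 1} satisfying H * Hᵀ = n • I, and n ≥ 3, then 4 divides n. -/
theorem hadamard_order_div_four (n : ℕ) (H : Matrix (Fin n) (Fin n) ℝ)
    (hent : ∀ i j, H i j = 1 ∨ H i j = -1)
    (hH : H * H.transpose = (n : ℝ) • (1 : Matrix (Fin n) (Fin n) ℝ))
    (hn : 3 ≤ n) : 4 ∣ n := by
  have horth : ∀ i k : Fin n, (∑ j, H i j * H k j) = if i = k then (n : ℝ) else 0 := by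
    intro i k
    have := congrFun (congrFun hH i) k
    simpa [Matrix.mul_apply, Matrix.transpose_apply, Matrix.one_apply, Matrix.smul_apply,
      mul_ite, mul_one, mul_zero] using this
  set i0 : Fin n := ⟨0, by omega⟩ with hi0
  set i1 : Fin n := ⟨1, by omega⟩ with hi1
  set i2 : Fin n := ⟨2, by omega⟩ with hi2
  have h01 : i0 ≠ i1 := by simp [hi0, hi1, Fin.ext_iff]
  have h02 : i0 ≠ i2 := by simp [hi0, hi2, Fin.ext_iff]
  have h12 : i1 ≠ i2 := by simp [hi1, hi2, Fin.ext_iff]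
  -- each term (H i0 j + H i1 j)*(H i0 j + H i2 j) is 4 times an integer
  have hterm : ∀ j : Fin n, ∃ m : ℤ,
      (H i0 j + H i1 j) * (H i0 j + H i2 j) = 4 * (m : ℝ) := by
    intro j
    rcases hent i0 j with h0 | h0 <;> rcases hent i1 j with h1 | h1 <;>
      rcases hent i2 j with h2 | h2
    · exact ⟨1, by rw [h0, h1, h2]; norm_num⟩
    · exact ⟨0, by rw [h0, h1, h2]; norm_num⟩
    · exact ⟨0, by rw [h0, h1, h2]; norm_num⟩
    · exact ⟨0, by rw [h0, h1, h2]; norm_num⟩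
    · exact ⟨0, by rw [h0, h1, h2]; norm_num⟩
    · exact ⟨0, by rw [h0, h1, h2]; norm_num⟩
    · exact ⟨0, by rw [h0, h1, h2]; norm_num⟩
    · exact ⟨1, by rw [h0, h1, h2]; norm_num⟩
  choose m hm using hterm
  have hsum : (∑ j, (H i0 j + H i1 j) * (H i0 j + H i2 j)) = (n : ℝ) := by
    have hexp : (∑ j, (H i0 j + H i1 j) * (H i0 j + H i2 j))
        = (∑ j, H i0 j * H i0 j) + (∑ j, H i0 j * H i2 j)
          + (∑ j, H i1 j * H i0 j) + (∑ j, H i1 j * H i2 j) := by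
      rw [← Finset.sum_add_distrib, ← Finset.sum_add_distrib, ← Finset.sum_add_distrib]
      exact Finset.sum_congr rfl fun j _ => by ring
    rw [hexp, horth i0 i0, horth i0 i2, horth i1 i0, horth i1 i2]
    simp [h02, h12, h01.symm]
  have hsum2 : (n : ℝ) = 4 * ((∑ j, m j : ℤ) : ℝ) := by
    rw [← hsum, Int.cast_sum, Finset.mul_sum]
    exact Finset.sum_congr rfl fun j _ => hm j
  have hz : (n : ℤ) = 4 * (∑ j, m j) := by exact_mod_cast hsum2
  have : (4 : ℤ) ∣ (n : ℤ) := ⟨_, hz⟩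
  exact_mod_cast this
end

section
/- Let A = J - 2I and B = J (q×q all-ones matrix J), K₂ = ![![0,1],![-1,0]], and N = K₂ ⊗ A + I₂ ⊗ B. Then N * Nᵀ = I₂ ⊗ ((2q - 4) • J + 4 • I). -/
open Kronecker in
theorem case_I (q : ℕ) (J : Matrix (Fin q) (Fin q) ℝ) (hJ : ∀ i j, J i j = 1)
    (K₂ : Matrix (Fin 2) (Fin 2) ℝ) (hK : K₂ = !![0, 1; -1, 0])
    (A B : Matrix (Fin q) (Fin q) ℝ) (hA : A = J - 2 • 1) (hB : B = J)
    (N : Matrix (Fin 2 × Fin q) (Fin 2 × Fin q) ℝ)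
    (hN : N = K₂ ⊗ₖ A + (1 : Matrix (Fin 2) (Fin 2) ℝ) ⊗ₖ B) :
    N * N.transpose =
      (1 : Matrix (Fin 2) (Fin 2) ℝ) ⊗ₖ ((2 * (q : ℝ) - 4) • J + (4 : ℝ) • 1) := by
  have hJJ : J * J = (q : ℝ) • J := by
    ext i j
    simp [Matrix.mul_apply, hJ, Finset.sum_const, Matrix.smul_apply]
  have hJT : J.transpose = J := by
    ext i j; simp [hJ]
  have hAT : A.transpose = A := by
    simp [hA, Matrix.transpose_sub, hJT, Matrix.transpose_smul]
  have hKT : K₂.transpose = -K₂ := by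
    subst hK; ext i j; fin_cases i <;> fin_cases j <;> simp
  have hKK : K₂ * K₂ = -1 := by
    subst hK; ext i j; fin_cases i <;> fin_cases j <;>
      simp [Matrix.mul_apply, Fin.sum_univ_two]
  have hNT : N.transpose = (-K₂) ⊗ₖ A + (1 : Matrix (Fin 2) (Fin 2) ℝ) ⊗ₖ B := by
    rw [hN, Matrix.transpose_add, ← Matrix.kroneckerMap_transpose,
      ← Matrix.kroneckerMap_transpose, hAT, hKT, Matrix.transpose_one, hB, hJT]
  rw [hNT, hN]
  rw [Matrix.add_mul, Matrix.mul_add, Matrix.mul_add,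
    ← Matrix.mul_kronecker_mul, ← Matrix.mul_kronecker_mul,
    ← Matrix.mul_kronecker_mul, ← Matrix.mul_kronecker_mul]
  have hAB : A * B = B * A := by
    simp only [hA, hB, Matrix.sub_mul, Matrix.mul_sub, Matrix.smul_mul,
      Matrix.mul_smul, Matrix.one_mul, Matrix.mul_one]
  have h1 : K₂ * -K₂ = 1 := by rw [Matrix.mul_neg, hKK, neg_neg]
  have h2 : (1 : Matrix (Fin 2) (Fin 2) ℝ) * -K₂ = -K₂ := Matrix.one_mul _
  have h3 : K₂ * 1 = K₂ := Matrix.mul_one _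
  have h4 : (1 : Matrix (Fin 2) (Fin 2) ℝ) * 1 = 1 := Matrix.one_mul _
  rw [h1, h2, h3, h4]
  have hcross : (-K₂) ⊗ₖ (B * A) + K₂ ⊗ₖ (A * B) = 0 := by
    rw [hAB]
    ext i j
    simp [Matrix.kroneckerMap_apply]
  have hfin : A * A + B * B = (2 * (q : ℝ) - 4) • J + (4 : ℝ) • 1 := by
    have h2m : (2 • 1 : Matrix (Fin q) (Fin q) ℝ) = (2 : ℝ) • 1 := by
      ext i j; simp [Matrix.smul_apply]
    rw [hA, hB, h2m, Matrix.sub_mul, Matrix.mul_sub, Matrix.mul_sub,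
      Matrix.smul_mul, Matrix.mul_smul, Matrix.mul_smul, Matrix.one_mul,
      Matrix.mul_one, hJJ]
    ext i j
    simp [Matrix.sub_apply, Matrix.add_apply, Matrix.smul_apply, Matrix.one_apply, hJ]
    split <;> ring
  calc (1 : Matrix (Fin 2) (Fin 2) ℝ) ⊗ₖ (A * A) + K₂ ⊗ₖ (A * B)
        + ((-K₂) ⊗ₖ (B * A) + (1 : Matrix (Fin 2) (Fin 2) ℝ) ⊗ₖ (B * B))
      = (1 : Matrix (Fin 2) (Fin 2) ℝ) ⊗ₖ (A * A) + (1 : Matrix (Fin 2) (Fin 2) ℝ) ⊗ₖ (B * B)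
        + ((-K₂) ⊗ₖ (B * A) + K₂ ⊗ₖ (A * B)) := by abel
    _ = (1 : Matrix (Fin 2) (Fin 2) ℝ) ⊗ₖ (A * A + B * B) := by
        rw [hcross, add_zero, Matrix.kronecker_add]
    _ = _ := by rw [hfin]
end

section
/- Let C be a q×q skew-symmetric matrix with C * Cᵀ = q • I - J. Define the 2q×2q block matrix M = ![![C + I, C + I], ![C + I, -C - I]] (via Matrix.fromBlocks). Then M * Mᵀ = I₂ ⊗ (2(q+1) • I - 2 • J). -/
theorem case_A (q : ℕ) (J : Matrix (Fin q) (Fin q) ℝ) (hJ : ∀ i j, J i j = 1)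
    (C : Matrix (Fin q) (Fin q) ℝ) (hskew : C.transpose = -C)
    (hCC : C * C.transpose = (q : ℝ) • (1 : Matrix (Fin q) (Fin q) ℝ) - J)
    (M : Matrix (Fin q ⊕ Fin q) (Fin q ⊕ Fin q) ℝ)
    (hM : M = Matrix.fromBlocks (C + 1) (C + 1) (C + 1) (-C - 1)) :
    M * M.transpose =
      Matrix.fromBlocks ((2 * ((q : ℝ) + 1)) • 1 - (2 : ℝ) • J) 0 0
        ((2 * ((q : ℝ) + 1)) • 1 - (2 : ℝ) • J) := by
  have key : (C + 1) * (C + 1).transpose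
      = ((q : ℝ) + 1) • (1 : Matrix (Fin q) (Fin q) ℝ) - J := by
    rw [Matrix.transpose_add, Matrix.transpose_one, mul_add, add_mul, add_mul,
      hCC, hskew]
    simp only [mul_one, one_mul]
    module
  subst hM
  have h1 : (-C - 1 : Matrix (Fin q) (Fin q) ℝ) = -(C + 1) := by abel
  rw [h1, Matrix.fromBlocks_transpose, Matrix.transpose_neg,
    Matrix.fromBlocks_multiply]
  have h2 : ((q:ℝ)+1) • (1 : Matrix (Fin q) (Fin q) ℝ) - J + (((q:ℝ)+1) • 1 - J)
      = (2*((q:ℝ)+1)) • 1 - (2:ℝ) • J := by module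
  simp only [Matrix.mul_neg, Matrix.neg_mul, neg_neg, key, add_neg_cancel, h2]
end

section
/- Let C be a q×q symmetric matrix with C * Cᵀ = q • I - J. Define M = Matrix.fromBlocks (C + I) (-C + I) (-C + I) (-C - I). Then M * Mᵀ = I₂ ⊗ (2(q+1) • I - 2 • J). -/
theorem case_B (q : ℕ) (J : Matrix (Fin q) (Fin q) ℝ) (hJ : ∀ i j, J i j = 1)
    (C : Matrix (Fin q) (Fin q) ℝ) (hsym : C.transpose = C)
    (hCC : C * C.transpose = (q : ℝ) • (1 : Matrix (Fin q) (Fin q) ℝ) - J)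
    (M : Matrix (Fin q ⊕ Fin q) (Fin q ⊕ Fin q) ℝ)
    (hM : M = Matrix.fromBlocks (C + 1) (-C + 1) (-C + 1) (-C - 1)) :
    M * M.transpose =
      Matrix.fromBlocks ((2 * ((q : ℝ) + 1)) • 1 - (2 : ℝ) • J) 0 0
        ((2 * ((q : ℝ) + 1)) • 1 - (2 : ℝ) • J) := by
  have h2 : C * C = (q : ℝ) • (1 : Matrix (Fin q) (Fin q) ℝ) - J := by
    rwa [hsym] at hCC
  subst hM
  rw [Matrix.fromBlocks_transpose, Matrix.fromBlocks_multiply]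
  simp only [Matrix.transpose_add, Matrix.transpose_neg, Matrix.transpose_sub,
    Matrix.transpose_one, hsym]
  simp only [add_mul, mul_add, sub_mul, mul_sub, neg_mul, mul_neg, mul_one, one_mul,
    neg_neg, h2, smul_sub, smul_smul]
  rw [Matrix.fromBlocks_inj]
  refine ⟨?_, ?_, ?_, ?_⟩ <;> module
end

section
/- Let S be an (s+1)×(s+1) skew-symmetric matrix with S * Sᵀ = s • I, and let M, N be m×m matrices satisfying M * Nᵀ = N * Mᵀ. Then for H' = S ⊗ M + I ⊗ N, one has H' * H'ᵀ = (S * Sᵀ) ⊗ (M * Mᵀ) + I ⊗ (N * Nᵀ) = s • I ⊗ (M * Mᵀ) + I ⊗ (N * Nᵀ). -/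
open Kronecker in
lemma neg_kronecker_aux {l n p q : Type*} (A : Matrix l n ℝ) (B : Matrix p q ℝ) :
    (-A) ⊗ₖ B = -(A ⊗ₖ B) := by
  ext ⟨i, j⟩ ⟨k, r⟩
  simp [Matrix.kroneckerMap_apply]

open Kronecker in
theorem cross_terms_cancel (s m : ℕ)
    (S : Matrix (Fin (s + 1)) (Fin (s + 1)) ℝ) (hskew : S.transpose = -S)
    (hSS : S * S.transpose = (s : ℝ) • (1 : Matrix (Fin (s + 1)) (Fin (s + 1)) ℝ))
    (M N : Matrix (Fin m) (Fin m) ℝ)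
    (hMN : M * N.transpose = N * M.transpose)
    (H' : Matrix (Fin (s + 1) × Fin m) (Fin (s + 1) × Fin m) ℝ)
    (hH' : H' = S ⊗ₖ M + (1 : Matrix (Fin (s + 1)) (Fin (s + 1)) ℝ) ⊗ₖ N) :
    H' * H'.transpose =
        (S * S.transpose) ⊗ₖ (M * M.transpose) +
          (1 : Matrix (Fin (s + 1)) (Fin (s + 1)) ℝ) ⊗ₖ (N * N.transpose) ∧
    H' * H'.transpose =
        (s : ℝ) • ((1 : Matrix (Fin (s + 1)) (Fin (s + 1)) ℝ) ⊗ₖ (M * M.transpose)) +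
          (1 : Matrix (Fin (s + 1)) (Fin (s + 1)) ℝ) ⊗ₖ (N * N.transpose) := by
  have key : H' * H'.transpose =
      (S * S.transpose) ⊗ₖ (M * M.transpose) +
        (1 : Matrix (Fin (s + 1)) (Fin (s + 1)) ℝ) ⊗ₖ (N * N.transpose) := by
    subst hH'
    rw [Matrix.transpose_add, ← Matrix.kroneckerMap_transpose, ← Matrix.kroneckerMap_transpose,
      Matrix.add_mul, Matrix.mul_add, Matrix.mul_add,
      ← Matrix.mul_kronecker_mul, ← Matrix.mul_kronecker_mul,
      ← Matrix.mul_kronecker_mul, ← Matrix.mul_kronecker_mul]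
    simp only [Matrix.transpose_one, Matrix.mul_one, Matrix.one_mul, hskew, hMN,
      neg_kronecker_aux]
    abel
  refine ⟨key, ?_⟩
  rw [key, hSS, Matrix.smul_kronecker]
end

section
/- Let q ≡ 1 (mod 4), s = q - 2, S an (s+1)×(s+1) skew-symmetric ±1-off-diagonal matrix with S Sᵀ = s • I coming from a skew Hadamard matrix, and C a symmetric q×q conference matrix (C Cᵀ = qI - J, C J = J C = 0, zero diagonal, ±1 off-diagonal). Let M = fromBlocks (C+I) (I-C) (I-C) (-(C+I)) and N = fromBlocks (J-2I) J (-J) (J-2I). Then H' = S ⊗ M + I ⊗ N satisfies H' * H'ᵀ = (2q(s+1)) • I, i.e. H' is a Hadamard matrix of order 2q(s+1). -/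
open Kronecker in
theorem thm_3_1 (q s : ℕ) (hq : q % 4 = 1) (hs : q = s + 2)
    (S : Matrix (Fin (s + 1)) (Fin (s + 1)) ℝ) (hSskew : S.transpose = -S)
    (hSent : ∀ i j, i ≠ j → S i j = 1 ∨ S i j = -1)
    (hSS : S * S.transpose = (s : ℝ) • (1 : Matrix (Fin (s + 1)) (Fin (s + 1)) ℝ))
    (J : Matrix (Fin q) (Fin q) ℝ) (hJ : ∀ i j, J i j = 1)
    (C : Matrix (Fin q) (Fin q) ℝ) (hCsym : C.transpose = C)
    (hCdiag : ∀ i, C i i = 0) (hCent : ∀ i j, i ≠ j → C i j = 1 ∨ C i j = -1)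
    (hCC : C * C.transpose = (q : ℝ) • (1 : Matrix (Fin q) (Fin q) ℝ) - J)
    (hCJ : C * J = 0) (hJC : J * C = 0)
    (M N : Matrix (Fin q ⊕ Fin q) (Fin q ⊕ Fin q) ℝ)
    (hM : M = Matrix.fromBlocks (C + 1) (1 - C) (1 - C) (-(C + 1)))
    (hN : N = Matrix.fromBlocks (J - 2 • 1) J (-J) (J - 2 • 1))
    (H' : Matrix (Fin (s + 1) × (Fin q ⊕ Fin q)) (Fin (s + 1) × (Fin q ⊕ Fin q)) ℝ)
    (hH' : H' = S ⊗ₖ M + (1 : Matrix (Fin (s + 1)) (Fin (s + 1)) ℝ) ⊗ₖ N) :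
    H' * H'.transpose = (2 * (q : ℝ) * ((s : ℝ) + 1)) • 1 := by
  have hq' : (q : ℝ) = (s : ℝ) + 2 := by rw [hs]; push_cast; ring
  have hC2 : C * C = (q : ℝ) • (1 : Matrix (Fin q) (Fin q) ℝ) - J := by
    rw [hCsym] at hCC; exact hCC
  have hJJ : J * J = (q : ℝ) • J := by
    ext i j
    simp [Matrix.mul_apply, hJ]
  have hJsym : J.transpose = J := by
    ext i j; simp [Matrix.transpose_apply, hJ]
  have hMt : M.transpose = M := by
    rw [hM, Matrix.fromBlocks_transpose]
    simp [Matrix.transpose_add, Matrix.transpose_sub, hCsym]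
  have hNt : N.transpose = Matrix.fromBlocks (J - 2 • 1) (-J) J (J - 2 • 1) := by
    rw [hN, Matrix.fromBlocks_transpose]
    simp [Matrix.transpose_sub, hJsym]
  set A : Matrix (Fin q) (Fin q) ℝ :=
    (2 * (q : ℝ) + 2) • 1 - (2 : ℝ) • J with hA
  set B : Matrix (Fin q) (Fin q) ℝ :=
    (2 * (q : ℝ) - 4) • J + (4 : ℝ) • 1 with hB
  have hMM : M * M.transpose = Matrix.fromBlocks A 0 0 A := by
    rw [hMt, hM, Matrix.fromBlocks_multiply]
    have e1 : (C + 1) * (C + 1) + (1 - C) * (1 - C) = 2 • (C * C) + 2 • 1 := by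
      noncomm_ring
    have e2 : (C + 1) * (1 - C) + (1 - C) * -(C + 1) = (0 : Matrix (Fin q) (Fin q) ℝ) := by
      noncomm_ring
    have e3 : (1 - C) * (C + 1) + -(C + 1) * (1 - C) = (0 : Matrix (Fin q) (Fin q) ℝ) := by
      noncomm_ring
    have e4 : (1 - C) * (1 - C) + -(C + 1) * -(C + 1) = 2 • (C * C) + 2 • 1 := by
      noncomm_ring
    have hXA : 2 • ((q : ℝ) • (1 : Matrix (Fin q) (Fin q) ℝ) - J) + 2 • 1 = A := by
      rw [hA]; simp only [two_smul]; module
    rw [e1, e2, e3, e4, hC2, hXA]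
  have hNN : N * N.transpose = Matrix.fromBlocks B 0 0 B := by
    rw [hNt, hN, Matrix.fromBlocks_multiply]
    have e1 : (J - 2 • 1) * (J - 2 • 1) + J * J = 2 • (J * J) - 4 • J + 4 • 1 := by
      noncomm_ring
    have e2 : (J - 2 • 1) * -J + J * (J - 2 • 1) = (0 : Matrix (Fin q) (Fin q) ℝ) := by
      noncomm_ring
    have e3 : -J * (J - 2 • 1) + (J - 2 • 1) * J = (0 : Matrix (Fin q) (Fin q) ℝ) := by
      noncomm_ring
    have e4 : -J * -J + (J - 2 • 1) * (J - 2 • 1) = 2 • (J * J) - 4 • J + 4 • 1 := by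
      noncomm_ring
    have hXB : 2 • ((q : ℝ) • J) - 4 • J + 4 • (1 : Matrix (Fin q) (Fin q) ℝ) = B := by
      rw [hB]; simp only [two_smul]
      have h4 : ∀ X : Matrix (Fin q) (Fin q) ℝ, (4 : ℕ) • X = X + X + X + X := by
        intro X; rw [show (4:ℕ) = 2 + 2 from rfl, add_smul, two_smul]; abel
      rw [h4, h4]; module
    rw [e1, e2, e3, e4, hJJ, hXB]
  have hMN : M * N.transpose = N * M.transpose := by
    rw [hMt, hNt, hM, hN, Matrix.fromBlocks_multiply, Matrix.fromBlocks_multiply]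
    have l1 : (C + 1) * (J - 2 • 1) + (1 - C) * J = 2 • J - 2 • C - 2 • 1 := by
      noncomm_ring
    have r1 : (J - 2 • 1) * (C + 1) + J * (1 - C) = 2 • J - 2 • C - 2 • 1 := by
      noncomm_ring
    have l2 : (C + 1) * -J + (1 - C) * (J - 2 • 1) = 2 • C - 2 • 1 := by
      have h : (C + 1) * -J + (1 - C) * (J - 2 • 1)
          = 2 • C - 2 • 1 - 2 • (C * J) := by noncomm_ring
      rw [h, hCJ]; simp
    have r2 : (J - 2 • 1) * (1 - C) + J * -(C + 1) = 2 • C - 2 • 1 := by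
      have h : (J - 2 • 1) * (1 - C) + J * -(C + 1)
          = 2 • C - 2 • 1 - 2 • (J * C) := by noncomm_ring
      rw [h, hJC]; simp
    have l3 : (1 - C) * (J - 2 • 1) + -(C + 1) * J = 2 • C - 2 • 1 := by
      have h : (1 - C) * (J - 2 • 1) + -(C + 1) * J
          = 2 • C - 2 • 1 - 2 • (C * J) := by noncomm_ring
      rw [h, hCJ]; simp
    have r3 : -J * (C + 1) + (J - 2 • 1) * (1 - C) = 2 • C - 2 • 1 := by
      have h : -J * (C + 1) + (J - 2 • 1) * (1 - C)
          = 2 • C - 2 • 1 - 2 • (J * C) := by noncomm_ring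
      rw [h, hJC]; simp
    have l4 : (1 - C) * -J + -(C + 1) * (J - 2 • 1) = 2 • C + 2 • 1 - 2 • J := by
      noncomm_ring
    have r4 : -J * (1 - C) + (J - 2 • 1) * -(C + 1) = 2 • C + 2 • 1 - 2 • J := by
      noncomm_ring
    rw [l1, r1, l2, r2, l3, r3, l4, r4]
  rw [hH', Matrix.transpose_add, ← Matrix.kroneckerMap_transpose,
    ← Matrix.kroneckerMap_transpose, add_mul, mul_add, mul_add,
    ← Matrix.mul_kronecker_mul, ← Matrix.mul_kronecker_mul,
    ← Matrix.mul_kronecker_mul, ← Matrix.mul_kronecker_mul,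
    Matrix.transpose_one, one_mul, mul_one, hSS, hSskew, hMM, hNN, hMN]
  have hcancel : S ⊗ₖ (N * M.transpose) + (-S) ⊗ₖ (N * M.transpose)
      = (0 : Matrix (Fin (s + 1) × (Fin q ⊕ Fin q)) (Fin (s + 1) × (Fin q ⊕ Fin q)) ℝ) := by
    rw [← Matrix.add_kronecker]
    simp
  rw [add_assoc, ← add_assoc (S ⊗ₖ (N * M.transpose)), hcancel, zero_add,
    Matrix.smul_kronecker, ← Matrix.kronecker_smul, one_mul, ← Matrix.kronecker_add,
    Matrix.fromBlocks_smul, Matrix.fromBlocks_add]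
  have key : ((s : ℝ) • A + B) = (2 * (q : ℝ) * ((s : ℝ) + 1)) • 1 := by
    rw [hA, hB, hq']
    module
  simp only [smul_zero, add_zero, zero_add, key]
  have fin : Matrix.fromBlocks ((2 * (q : ℝ) * ((s : ℝ) + 1)) • (1 : Matrix (Fin q) (Fin q) ℝ)) 0 0
      ((2 * (q : ℝ) * ((s : ℝ) + 1)) • 1) = (2 * (q : ℝ) * ((s : ℝ) + 1)) • (1 : Matrix (Fin q ⊕ Fin q) (Fin q ⊕ Fin q) ℝ) := by
    rw [← Matrix.fromBlocks_one, Matrix.fromBlocks_smul, smul_zero]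
  rw [fin, Matrix.kronecker_smul, Matrix.one_kronecker_one]
end

section
/- Let s ≡ 3 (mod 4) with q = 2s + 1, S an (s+1)×(s+1) skew-symmetric matrix with S Sᵀ = s • I, and C a q×q skew-symmetric conference matrix (C Cᵀ = qI - J, C J = J C = 0). Let Q = C + I, M = fromBlocks Q Q Q (-Q), and N = fromBlocks J Q (-Q) J. Then H' = S ⊗ M + I ⊗ N satisfies H' * H'ᵀ = (2q(s+1)) • I. -/
open Kronecker in
theorem thm_3_2 (q s : ℕ) (hs : s % 4 = 3) (hq : q = 2 * s + 1)
    (S : Matrix (Fin (s + 1)) (Fin (s + 1)) ℝ) (hSskew : S.transpose = -S)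
    (hSS : S * S.transpose = (s : ℝ) • (1 : Matrix (Fin (s + 1)) (Fin (s + 1)) ℝ))
    (J : Matrix (Fin q) (Fin q) ℝ) (hJ : ∀ i j, J i j = 1)
    (C : Matrix (Fin q) (Fin q) ℝ) (hCskew : C.transpose = -C)
    (hCC : C * C.transpose = (q : ℝ) • (1 : Matrix (Fin q) (Fin q) ℝ) - J)
    (hCJ : C * J = 0) (hJC : J * C = 0)
    (Q : Matrix (Fin q) (Fin q) ℝ) (hQ : Q = C + 1)
    (M N : Matrix (Fin q ⊕ Fin q) (Fin q ⊕ Fin q) ℝ)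
    (hM : M = Matrix.fromBlocks Q Q Q (-Q))
    (hN : N = Matrix.fromBlocks J Q (-Q) J)
    (H' : Matrix (Fin (s + 1) × (Fin q ⊕ Fin q)) (Fin (s + 1) × (Fin q ⊕ Fin q)) ℝ)
    (hH' : H' = S ⊗ₖ M + (1 : Matrix (Fin (s + 1)) (Fin (s + 1)) ℝ) ⊗ₖ N) :
    H' * H'.transpose = (2 * (q : ℝ) * ((s : ℝ) + 1)) • 1 := by
  have hJT : J.transpose = J := by ext i j; simp [Matrix.transpose_apply, hJ]
  have hJJ : J * J = (q : ℝ) • J := by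
    ext i j
    simp [Matrix.mul_apply, hJ, Finset.sum_const, Matrix.smul_apply]
  have hQT : Q.transpose = -C + 1 := by
    rw [hQ, Matrix.transpose_add, hCskew, Matrix.transpose_one]
  have hCC' : -(C * C) = (q : ℝ) • 1 - J := by
    have := hCC; rw [hCskew, Matrix.mul_neg] at this; exact this
  have hA : Q * Q.transpose = ((q : ℝ) + 1) • 1 - J := by
    rw [hQT, hQ]
    have h1 : (C + 1) * (-C + 1) = -(C * C) + 1 := by noncomm_ring
    rw [h1, hCC', add_smul, one_smul]
    abel
  have hQJ : Q * J = J := by rw [hQ, add_mul, hCJ, one_mul, zero_add]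
  have hJQT : J * Q.transpose = J := by
    rw [hQT, mul_add, mul_neg, hJC, mul_one, neg_zero, zero_add]
  -- cross terms are symmetric
  have hMN : M * N.transpose = N * M.transpose := by
    rw [hM, hN, Matrix.fromBlocks_transpose, Matrix.fromBlocks_transpose,
      Matrix.fromBlocks_multiply, Matrix.fromBlocks_multiply]
    rw [Matrix.fromBlocks_inj]
    refine ⟨?_, ?_, ?_, ?_⟩ <;>
      simp only [Matrix.transpose_neg, hJT, Matrix.mul_neg, Matrix.neg_mul, hQJ, hJQT,
        neg_neg] <;> abel
  -- key scalar identity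
  have key : (s : ℝ) • (M * M.transpose) + N * N.transpose =
      (2 * (q : ℝ) * ((s : ℝ) + 1)) • 1 := by
    have hqr : (q : ℝ) = 2 * (s : ℝ) + 1 := by rw [hq]; push_cast; ring
    subst hq
    rw [hM, hN, Matrix.fromBlocks_transpose, Matrix.fromBlocks_transpose,
      Matrix.fromBlocks_multiply, Matrix.fromBlocks_multiply, ← Matrix.fromBlocks_one,
      Matrix.fromBlocks_smul, Matrix.fromBlocks_smul, Matrix.fromBlocks_add,
      Matrix.fromBlocks_inj]
    refine ⟨?_, ?_, ?_, ?_⟩ <;>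
      simp only [Matrix.transpose_neg, hJT, Matrix.mul_neg, Matrix.neg_mul, neg_neg,
        hQJ, hJQT, hJJ, hA, smul_zero] <;>
      match_scalars <;> push_cast <;> ring
  -- expand H' * H'ᵀ
  have hnegk : ∀ (A : Matrix (Fin (s+1)) (Fin (s+1)) ℝ)
      (B : Matrix (Fin q ⊕ Fin q) (Fin q ⊕ Fin q) ℝ), (-A) ⊗ₖ B = -(A ⊗ₖ B) := by
    intro A B; ext ⟨i, k⟩ ⟨j, l⟩; simp
  rw [hH', Matrix.transpose_add, ← Matrix.kroneckerMap_transpose,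
    ← Matrix.kroneckerMap_transpose, Matrix.transpose_one]
  show (S ⊗ₖ M + 1 ⊗ₖ N) * (S.transpose ⊗ₖ M.transpose + 1 ⊗ₖ N.transpose) = _
  rw [add_mul, mul_add, mul_add, ← Matrix.mul_kronecker_mul, ← Matrix.mul_kronecker_mul,
    ← Matrix.mul_kronecker_mul, ← Matrix.mul_kronecker_mul, hSS, hSskew, one_mul, mul_one,
    hnegk, hMN, Matrix.smul_kronecker, ← Matrix.kronecker_smul]
  have hre : ∀ (a b c : Matrix (Fin (s + 1) × (Fin q ⊕ Fin q))
      (Fin (s + 1) × (Fin q ⊕ Fin q)) ℝ), a + b + (-b + c) = a + c := by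
    intro a b c; abel
  rw [hre, one_mul, ← Matrix.kronecker_add, key, Matrix.kronecker_smul, Matrix.one_kronecker_one]
end
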